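/- arXiv:2202.11627 — 2 statements merged into one kernel-verified Lean document; each statement's English description precedes it below -/
import Mathlib

section
/- Let ℐ_1 be the set of paths of length n ≥ 0 with n ∉ {1,3} given by (UD)^{n/2} if n is even, and (UD)^{(n−5)/2}UUUDC_2 if n is odd (n ≥ 5). Let ℐ be the union of ℐ_1 with the set of paths of the form α_1U^{k_1}C_{k_1}α_2U^{k_2}C_{k_2}⋯α_rU^{k_r}C_{k_r}α_{r+1} where r ≥ 1, k_i ≥ 2 for 1 ≤ i ≤ r, and all α_i are in ℐ_1. Then for every path P ∈ ℰ there exists exactly one path Q ∈ ℐ with |Q| = |P| such that P and Q are UC-equivalent. In other words, ℐ is a complete set of representatives of the UC-equivalence classes of ℰ. -/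
/-- Steps of a Dyck path with catastrophes: up-step `U`, down-step `D`,
and catastrophe step `C k` of size `k` (valid paths only use `k ≥ 2`). -/
inductive Step where
  | U : Step
  | D : Step
  | C : ℕ → Step
  deriving DecidableEq

/-- The vertical displacement of a step. -/
def Step.val : Step → ℤ
  | .U => 1
  | .D => -1
  | .C k => -(k : ℤ)

/-- The height (ordinate) of the path after its first `i` steps. -/
def hgt (P : List Step) (i : ℕ) : ℤ := ((P.take i).map Step.val).sum

/-- `InE P` means `P` is a Dyck path with catastrophes (a member of ℰ):
it stays at height ≥ 0, ends on the x-axis, and every catastrophe step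
`C k` has `k ≥ 2` and starts at height `k` (hence ends on the x-axis). -/
def InE (P : List Step) : Prop :=
  (∀ i, 0 ≤ hgt P i) ∧ hgt P P.length = 0 ∧
    ∀ i k, P[i]? = some (Step.C k) → 2 ≤ k ∧ hgt P i = (k : ℤ)

/-- `(UD)^k`. -/
def UDpow (k : ℕ) : List Step := (List.replicate k [Step.U, Step.D]).flatten

/-- `(DU)^k`. -/
def DUpow (k : ℕ) : List Step := (List.replicate k [Step.D, Step.U]).flatten

/-- `U^k`. -/
def Upow (k : ℕ) : List Step := List.replicate k Step.U

/-- `C_s` with the convention `C_1 = D`. -/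
def cfin (s : ℕ) : Step := if s = 1 then Step.D else Step.C s

/-- Test whether a step is a catastrophe step. -/
def isCatB : Step → Bool
  | .C _ => true
  | _ => false

/-- The number of catastrophe steps in a path. -/
def catCount (P : List Step) : ℕ := P.countP isCatB

/-- Two paths are `UC`-equivalent when, for every `k ≥ 2`, the occurrences of
the pattern `U C_k` appear at the same positions in both paths. -/
def UCEquiv (P Q : List Step) : Prop :=
  ∀ k, 2 ≤ k → ∀ i : ℕ,
    (P[i]? = some Step.U ∧ P[i + 1]? = some (Step.C k)) ↔
    (Q[i]? = some Step.U ∧ Q[i + 1]? = some (Step.C k))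

/-- Membership in ℐ₁ : paths `(UD)^{n/2}` for even `n ≥ 0`, and
`(UD)^{(n-5)/2} UUUD C_2` for odd `n ≥ 5`. -/
def InI1 (P : List Step) : Prop :=
  (∃ k, P = UDpow k) ∨
  (∃ k, P = UDpow k ++ [Step.U, Step.U, Step.U, Step.D, Step.C 2])

/-- Membership in ℐ : union of ℐ₁ with the set of paths of the form
`α_1 U^{k_1} C_{k_1} α_2 U^{k_2} C_{k_2} ⋯ α_r U^{k_r} C_{k_r} α_{r+1}` with
`r ≥ 1`, all `k_i ≥ 2` and all `α_i ∈ ℐ₁` (the case `r = 0` giving ℐ₁). -/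
def InI (P : List Step) : Prop :=
  ∃ (L : List (List Step × ℕ)) (b : List Step),
    (∀ t ∈ L, InI1 t.1 ∧ 2 ≤ t.2) ∧ InI1 b ∧
    P = (L.map (fun t => t.1 ++ Upow t.2 ++ [Step.C t.2])).flatten ++ b

/-!
Give `U`, `D`, `C_j` the deficits `0`, `2`, `j + 1`, so that a prefix of length `i` ends at
height `i` minus its total deficit. Deficits of prefixes of paths in ℰ are never `1`, and `3` only
for prefixes `U U C_2 U^b`, which contain the pattern `U C_2` at position 1. So if `P` has no
pattern `U C_k`, its length (its total deficit) is the length of a path of ℐ₁. Otherwise, if the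
first pattern is at position `i`, the first `i` steps end at height `k - 1`, so their deficit
`i + 1 - k` is the length of a path `α` of ℐ₁, and `α U^k C_k` has the same patterns as the first
`i + 2` steps of `P`; the rest starts on the x-axis and is handled by induction. Conversely, paths
of ℐ₁ contain no pattern and there is one of each admissible length, so the first pattern of a
path of ℐ determines its first block `α₁ U^{k₁} C_{k₁}`, and uniqueness follows by induction on
the number of blocks.
-/

open Step

lemma length_Upow (k : ℕ) : (Upow k).length = k := List.length_replicate

lemma hgt_zero (P : List Step) : hgt P 0 = 0 := by simp [hgt]

lemma hgt_succ {P : List Step} {i : ℕ} {s : Step} (h : P[i]? = some s) :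
    hgt P (i + 1) = hgt P i + s.val := by
  simp [hgt, List.take_add_one, h]

lemma hgt_eq_of_length_le {P : List Step} {i : ℕ} (h : P.length ≤ i) :
    hgt P i = hgt P P.length := by
  simp [hgt, List.take_of_length_le h]

lemma hgt_append (A B : List Step) (i : ℕ) :
    hgt (A ++ B) i = hgt A i + hgt B (i - A.length) := by
  simp [hgt, List.take_append]

lemma hgt_drop (P : List Step) (s j : ℕ) :
    hgt (P.drop s) j = hgt P (s + j) - hgt P s := by
  simp [hgt, List.take_add]

lemma hgt_take (P : List Step) (i j : ℕ) : hgt (P.take i) j = hgt P (min j i) := by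
  simp [hgt, List.take_take]

lemma hgt_Upow (k i : ℕ) : hgt (Upow k) i = min i k := by
  simp [hgt, Upow, List.take_replicate, Step.val]

lemma InE.hgt_of_length_le {P : List Step} (hP : InE P) {i : ℕ} (h : P.length ≤ i) :
    hgt P i = 0 := by
  rw [hgt_eq_of_length_le h, hP.2.1]

lemma InE.two_le {P : List Step} (hP : InE P) {k : ℕ} (h : C k ∈ P) : 2 ≤ k := by
  obtain ⟨i, hi⟩ := List.mem_iff_getElem?.mp h
  exact (hP.2.2 i k hi).1

lemma InE.of_le_length {P : List Step} (h₀ : ∀ i ≤ P.length, 0 ≤ hgt P i)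
    (h₁ : hgt P P.length = 0)
    (h₂ : ∀ i k, P[i]? = some (C k) → 2 ≤ k ∧ hgt P i = k) : InE P := by
  refine ⟨fun i => ?_, h₁, h₂⟩
  rcases le_total i P.length with h | h
  · exact h₀ i h
  · rw [hgt_eq_of_length_le h]
    exact h₀ _ le_rfl

lemma InE.append {A B : List Step} (hA : InE A) (hB : InE B) : InE (A ++ B) := by
  refine ⟨fun i => ?_, ?_, fun i k h => ?_⟩
  · rw [hgt_append]
    exact add_nonneg (hA.1 i) (hB.1 _)
  · rw [hgt_append, hA.hgt_of_length_le (by simp), List.length_append, Nat.add_sub_cancel_left,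
      hB.2.1, add_zero]
  · rw [hgt_append]
    rcases lt_or_ge i A.length with hi | hi
    · rw [List.getElem?_append_left hi] at h
      rw [Nat.sub_eq_zero_of_le hi.le, hgt_zero, add_zero]
      exact hA.2.2 i k h
    · rw [List.getElem?_append_right hi] at h
      rw [hA.hgt_of_length_le hi, zero_add]
      exact hB.2.2 _ k h

lemma InE.drop {P : List Step} (hP : InE P) {s : ℕ} (hs : hgt P s = 0) : InE (P.drop s) := by
  refine ⟨fun i => ?_, ?_, fun i k h => ?_⟩
  · rw [hgt_drop, hs, sub_zero]
    exact hP.1 _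
  · rw [hgt_drop, hs, sub_zero, hP.hgt_of_length_le (by simp; omega)]
  · rw [List.getElem?_drop] at h
    rw [hgt_drop, hs, sub_zero]
    exact hP.2.2 _ k h

lemma UDpow_succ (k : ℕ) : UDpow (k + 1) = UDpow k ++ [U, D] := by
  simp [UDpow, List.replicate_succ']

lemma length_UDpow (k : ℕ) : (UDpow k).length = 2 * k := by
  induction k with
  | zero => rfl
  | succ k ih => simp [UDpow_succ, ih]; ring

lemma inE_UD : InE [U, D] := by
  refine InE.of_le_length (by decide) (by decide) fun i k h => ?_
  match i, h with
  | 0, h | 1, h => simp at h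

lemma inE_UDpow (k : ℕ) : InE (UDpow k) := by
  induction k with
  | zero => exact InE.of_le_length (by simp [UDpow, hgt]) (by simp [UDpow, hgt]) (by simp [UDpow])
  | succ k ih => rw [UDpow_succ]; exact ih.append inE_UD

lemma inE_UUUDC2 : InE [U, U, U, D, C 2] := by
  refine InE.of_le_length (by decide) (by decide) fun i k h => ?_
  match i, h with
  | 0, h | 1, h | 2, h | 3, h => simp at h
  | 4, h => simp at h; subst h; decide

lemma InI1.inE {α : List Step} (h : InI1 α) : InE α := by
  rcases h with ⟨k, rfl⟩ | ⟨k, rfl⟩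
  · exact inE_UDpow k
  · exact (inE_UDpow k).append inE_UUUDC2

lemma getElem?_Upow_append_C (k j : ℕ) :
    (Upow k ++ [C k])[j]? = if j < k then some U else if j = k then some (C k) else none := by
  rw [List.getElem?_append, Upow, List.length_replicate, List.getElem?_singleton]
  split_ifs <;> first | omega | simp [*]

lemma hgt_Upow_append_C (k i : ℕ) : hgt (Upow k ++ [C k]) i = if i ≤ k then (i : ℤ) else 0 := by
  rw [hgt_append, hgt_Upow, length_Upow]
  split_ifs with hik
  · rw [Nat.sub_eq_zero_of_le hik, hgt_zero]; omega
  · rw [hgt_eq_of_length_le (by simp; omega)]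
    simp [hgt, Step.val]; omega

lemma inE_Upow_append_C {k : ℕ} (hk : 2 ≤ k) : InE (Upow k ++ [C k]) := by
  refine InE.of_le_length (fun i _ => ?_) ?_ fun i k' h => ?_
  · rw [hgt_Upow_append_C]; split_ifs <;> omega
  · simp [hgt_Upow_append_C, length_Upow]
  · rw [getElem?_Upow_append_C] at h
    split_ifs at h with h₁ h₂ <;> simp at h
    subst h₂ h
    simp [hgt_Upow_append_C, hk]

def UCAt (P : List Step) (i k : ℕ) : Prop :=
  P[i]? = some U ∧ P[i + 1]? = some (C k)

lemma ucEquiv_iff {P Q : List Step} :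
    UCEquiv P Q ↔ ∀ k, 2 ≤ k → ∀ i, UCAt P i k ↔ UCAt Q i k := Iff.rfl

lemma UCEquiv.symm {P Q : List Step} (h : UCEquiv P Q) : UCEquiv Q P :=
  fun k hk i => (h k hk i).symm

lemma UCEquiv.trans {P Q R : List Step} (h₁ : UCEquiv P Q) (h₂ : UCEquiv Q R) : UCEquiv P R :=
  fun k hk i => (h₁ k hk i).trans (h₂ k hk i)

lemma UCAt.lt_length {P : List Step} {i k : ℕ} (h : UCAt P i k) : i + 1 < P.length :=
  (List.getElem?_eq_some_iff.mp h.2).1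

lemma ucAt_drop {P : List Step} {s j k : ℕ} : UCAt (P.drop s) j k ↔ UCAt P (s + j) k := by
  simp [UCAt, List.getElem?_drop, Nat.add_assoc]

lemma UCEquiv.drop {P Q : List Step} (h : UCEquiv P Q) (s : ℕ) : UCEquiv (P.drop s) (Q.drop s) :=
  fun k hk j => ucAt_drop.trans ((h k hk (s + j)).trans ucAt_drop.symm)

lemma ucAt_append {A B : List Step} (hA : A.getLast? ≠ some U) {i k : ℕ} :
    UCAt (A ++ B) i k ↔ UCAt A i k ∨ (A.length ≤ i ∧ UCAt B (i - A.length) k) := by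
  rcases lt_or_ge (i + 1) A.length with hi | hi
  · have hi' : ¬ A.length ≤ i := by omega
    simp [UCAt, List.getElem?_append_left (l₂ := B) hi,
      List.getElem?_append_left (l₁ := A) (l₂ := B) (i := i) (by omega), hi']
  rcases hi.eq_or_lt with hi | hi
  · have hlast : A[i]? = A.getLast? := by
      rw [List.getLast?_eq_getElem?, hi, Nat.add_sub_cancel]
    have hi' : ¬ A.length ≤ i := by omega
    simp [UCAt, List.getElem?_append_left (l₁ := A) (l₂ := B) (i := i) (by omega), hlast, hA, hi']
  · have hi' : A.length ≤ i := by omega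
    simp [UCAt, List.getElem?_append_right hi', List.getElem?_append_right hi.le,
      List.getElem?_eq_none hi.le, hi', Nat.sub_add_comm hi']

lemma UCEquiv.append {A A' B B' : List Step} (hA : A.getLast? ≠ some U)
    (hA' : A'.getLast? ≠ some U) (hlen : A.length = A'.length) (h₁ : UCEquiv A A')
    (h₂ : UCEquiv B B') : UCEquiv (A ++ B) (A' ++ B') := by
  refine ucEquiv_iff.mpr fun k hk i => ?_
  rw [ucAt_append hA, ucAt_append hA', hlen]
  exact or_congr (h₁ k hk i) (and_congr_right fun _ => h₂ k hk _)

lemma ucAt_take_iff {P : List Step} {m j k : ℕ} :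
    UCAt (P.take m) j k ↔ j + 2 ≤ m ∧ UCAt P j k := by
  simp only [UCAt, List.getElem?_take]
  constructor
  · intro h
    split_ifs at h with h₁ h₂ <;> simp_all
    omega
  · rintro ⟨hm, h⟩
    rwa [if_pos (by omega), if_pos (by omega)]

lemma ucAt_take_iff_of_first {P : List Step} {i k : ℕ} (hik : UCAt P i k)
    (hmin : ∀ j < i, ∀ k', ¬ UCAt P j k') {j k' : ℕ} :
    UCAt (P.take (i + 2)) j k' ↔ j = i ∧ k' = k := by
  rw [ucAt_take_iff]
  constructor
  · rintro ⟨hj, h⟩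
    obtain rfl : j = i := by
      by_contra hne
      exact hmin j (by omega) k' h
    simpa using h.2.symm.trans hik.2
  · rintro ⟨rfl, rfl⟩
    exact ⟨le_rfl, hik⟩

lemma InE.hgt_of_ucAt {P : List Step} (hP : InE P) {i k : ℕ} (h : UCAt P i k) :
    2 ≤ k ∧ hgt P i + 1 = k ∧ hgt P (i + 2) = 0 := by
  obtain ⟨hk, hhk⟩ := hP.2.2 (i + 1) k h.2
  refine ⟨hk, ?_, ?_⟩
  · rw [← hhk, hgt_succ h.1, Step.val]
  · rw [hgt_succ h.2, hhk, Step.val, add_neg_cancel]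

lemma getLast?_UDpow_ne_U (m : ℕ) : (UDpow m).getLast? ≠ some U := by
  cases m <;> simp [UDpow]

lemma InI1.getLast?_ne_U {α : List Step} (h : InI1 α) : α.getLast? ≠ some U := by
  rcases h with ⟨m, rfl⟩ | ⟨m, rfl⟩
  · exact getLast?_UDpow_ne_U m
  · simp

lemma not_ucAt_UDpow (m i k : ℕ) : ¬ UCAt (UDpow m) i k := fun h => by
  have := List.mem_of_getElem? h.2
  simp [UDpow] at this

lemma InI1.not_ucAt {α : List Step} (h : InI1 α) (i k : ℕ) : ¬ UCAt α i k := by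
  rcases h with ⟨m, rfl⟩ | ⟨m, rfl⟩
  · exact not_ucAt_UDpow m i k
  rw [ucAt_append (getLast?_UDpow_ne_U m)]
  rintro (h | ⟨-, h⟩)
  · exact not_ucAt_UDpow m i k h
  · generalize i - (UDpow m).length = j at h
    have hj : j < 4 := by have := h.lt_length; simp at this; omega
    obtain ⟨hU, hC⟩ := h
    interval_cases j <;> simp_all

def canonicalI1 (n : ℕ) : List Step :=
  if n % 2 = 0 then UDpow (n / 2) else UDpow ((n - 5) / 2) ++ [U, U, U, D, C 2]

lemma inI1_canonicalI1 (n : ℕ) : InI1 (canonicalI1 n) := by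
  unfold canonicalI1
  split_ifs
  · exact .inl ⟨_, rfl⟩
  · exact .inr ⟨_, rfl⟩

lemma length_canonicalI1 {n : ℕ} (h₁ : n ≠ 1) (h₃ : n ≠ 3) : (canonicalI1 n).length = n := by
  unfold canonicalI1
  split_ifs <;> simp [length_UDpow] <;> omega

lemma InI1.eq_canonicalI1 {α : List Step} (h : InI1 α) : α = canonicalI1 α.length := by
  rcases h with ⟨m, rfl⟩ | ⟨m, rfl⟩
  · simp [canonicalI1, length_UDpow]
  · simp [canonicalI1, length_UDpow, Nat.add_mod]

lemma InI1.eq_of_length_eq {α β : List Step} (hα : InI1 α) (hβ : InI1 β)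
    (h : α.length = β.length) : α = β := by
  rw [hα.eq_canonicalI1, hβ.eq_canonicalI1, h]

def ucBlock (α : List Step) (k : ℕ) : List Step := α ++ Upow k ++ [C k]

lemma length_ucBlock (α : List Step) (k : ℕ) : (ucBlock α k).length = α.length + k + 1 := by
  simp [ucBlock, Upow, Nat.add_assoc]

lemma inE_ucBlock {α : List Step} (hα : InI1 α) {k : ℕ} (hk : 2 ≤ k) : InE (ucBlock α k) := by
  rw [ucBlock, List.append_assoc]
  exact hα.inE.append (inE_Upow_append_C hk)

lemma ucAt_Upow_append_C {k j k' : ℕ} : UCAt (Upow k ++ [C k]) j k' ↔ j + 1 = k ∧ k' = k := by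
  simp only [UCAt, getElem?_Upow_append_C]
  split_ifs <;> simp <;> omega

lemma ucAt_ucBlock {α : List Step} (hα : InI1 α) {k : ℕ} (hk : 1 ≤ k) {j k' : ℕ} :
    UCAt (ucBlock α k) j k' ↔ j + 1 = α.length + k ∧ k' = k := by
  rw [ucBlock, List.append_assoc, ucAt_append hα.getLast?_ne_U, ucAt_Upow_append_C]
  simp only [hα.not_ucAt, false_or]
  omega

lemma ucAt_ucBlock_append {α : List Step} (hα : InI1 α) {k : ℕ} (hk : 1 ≤ k) (R : List Step)
    {j k' : ℕ} : UCAt (ucBlock α k ++ R) j k' ↔ (j + 1 = α.length + k ∧ k' = k) ∨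
      (α.length + k + 1 ≤ j ∧ UCAt R (j - (α.length + k + 1)) k') := by
  rw [ucAt_append (by simp [ucBlock]), ucAt_ucBlock hα hk, length_ucBlock]

def ofBlocks (L : List (List Step × ℕ)) (b : List Step) : List Step :=
  (L.map fun t => ucBlock t.1 t.2).flatten ++ b

lemma ofBlocks_cons (t : List Step × ℕ) (L : List (List Step × ℕ)) (b : List Step) :
    ofBlocks (t :: L) b = ucBlock t.1 t.2 ++ ofBlocks L b := by
  simp [ofBlocks]

lemma inI_iff {P : List Step} : InI P ↔ ∃ (L : List (List Step × ℕ)) (b : List Step),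
    (∀ t ∈ L, InI1 t.1 ∧ 2 ≤ t.2) ∧ InI1 b ∧ P = ofBlocks L b := Iff.rfl

def Step.deficit : Step → ℕ
  | U => 0
  | D => 2
  | C k => k + 1

def deficitSum (l : List Step) : ℕ := (l.map Step.deficit).sum

lemma deficitSum_cons (s : Step) (l : List Step) :
    deficitSum (s :: l) = s.deficit + deficitSum l := by
  simp [deficitSum]

lemma sum_map_val (l : List Step) : (l.map Step.val).sum = l.length - deficitSum l := by
  induction l with
  | nil => simp [deficitSum]
  | cons s l ih =>
    rw [List.map_cons, List.sum_cons, ih, deficitSum_cons]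
    cases s <;> simp [Step.val, Step.deficit] <;> ring

lemma hgt_eq_sub_deficitSum {P : List Step} {i : ℕ} (h : i ≤ P.length) :
    hgt P i = i - deficitSum (P.take i) := by
  rw [hgt, sum_map_val, List.length_take, min_eq_left h]

lemma deficitSum_ne_one {l : List Step} (hl : ∀ k, C k ∈ l → 2 ≤ k) : deficitSum l ≠ 1 := by
  induction l with
  | nil => simp [deficitSum]
  | cons s l ih =>
    rw [deficitSum_cons]
    cases s with
    | U => simpa [Step.deficit] using ih fun k hk => hl k (by simp [hk])
    | D => simp [Step.deficit]; omega
    | C k => have := hl k (by simp); simp [Step.deficit]; omega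

lemma eq_Upow_of_deficitSum_eq_zero {l : List Step} (h : deficitSum l = 0) :
    l = Upow l.length := by
  refine List.eq_replicate_iff.mpr ⟨rfl, fun s hs => ?_⟩
  have := List.sum_eq_zero_iff.mp h _ (List.mem_map_of_mem hs)
  cases s <;> simp_all [Step.deficit]

lemma exists_eq_of_deficitSum_eq_three {l : List Step} (hl : ∀ k, C k ∈ l → 2 ≤ k)
    (h : deficitSum l = 3) : ∃ a b, l = Upow a ++ C 2 :: Upow b := by
  induction l with
  | nil => simp [deficitSum] at h
  | cons s l ih =>
    rw [deficitSum_cons] at h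
    have hl' : ∀ k, C k ∈ l → 2 ≤ k := fun k hk => hl k (by simp [hk])
    cases s with
    | U =>
      obtain ⟨a, b, rfl⟩ := ih hl' (by simpa [Step.deficit] using h)
      exact ⟨a + 1, b, by simp [Upow, List.replicate_succ]⟩
    | D => exact absurd (by simp [Step.deficit] at h; omega) (deficitSum_ne_one hl')
    | C k =>
      have := hl k (by simp)
      obtain ⟨rfl, hl0⟩ : k = 2 ∧ deficitSum l = 0 := by simp [Step.deficit] at h; omega
      exact ⟨0, l.length, by rw [← eq_Upow_of_deficitSum_eq_zero hl0]; rfl⟩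

lemma InE.ucAt_one_two_of_deficitSum_take_eq_three {P : List Step} (hP : InE P) {i : ℕ}
    (h : deficitSum (P.take i) = 3) : UCAt P 1 2 ∧ 2 < i := by
  obtain ⟨a, b, hab⟩ :=
    exists_eq_of_deficitSum_eq_three (fun k hk => hP.two_le (List.mem_of_mem_take hk)) h
  have hCa : (P.take i)[a]? = some (C 2) := by
    rw [hab, List.getElem?_append_right (by simp [Upow])]
    simp [Upow]
  rw [List.getElem?_take] at hCa
  split_ifs at hCa with hai
  obtain rfl : a = 2 := by
    have := (hP.2.2 a 2 hCa).2
    rw [← min_eq_left hai.le, ← hgt_take, hab, hgt_append, hgt_Upow, length_Upow, Nat.sub_self,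
      hgt_zero] at this
    omega
  have hU : (P.take i)[1]? = some U := by rw [hab]; rfl
  rw [List.getElem?_take, if_pos (by omega)] at hU
  exact ⟨⟨hU, hCa⟩, hai⟩

def IsUCRep (P Q : List Step) : Prop :=
  (InE Q ∧ InI Q) ∧ Q.length = P.length ∧ UCEquiv P Q

lemma InE.exists_isUCRep_of_forall_not_ucAt {P : List Step} (hP : InE P)
    (h : ∀ i k, ¬ UCAt P i k) : ∃ Q, IsUCRep P Q := by
  have hdef : deficitSum P = P.length := by
    have := hgt_eq_sub_deficitSum (le_refl P.length)
    rw [hP.2.1, List.take_length] at this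
    omega
  have h₁ : P.length ≠ 1 :=
    hdef ▸ deficitSum_ne_one fun k hk => hP.two_le hk
  have h₃ : P.length ≠ 3 := fun h₃ =>
    h 1 2 (hP.ucAt_one_two_of_deficitSum_take_eq_three (i := P.length)
      (by rw [List.take_length, hdef, h₃])).1
  have hα := inI1_canonicalI1 P.length
  exact ⟨canonicalI1 P.length, ⟨hα.inE, inI_iff.mpr ⟨[], _, by simp, hα, by simp [ofBlocks]⟩⟩,
    length_canonicalI1 h₁ h₃, fun k _ i => iff_of_false (h i k) (hα.not_ucAt i k)⟩

lemma InE.exists_isUCRep_of_first_ucAt {P : List Step} (hP : InE P) {i k : ℕ}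
    (hik : UCAt P i k) (hmin : ∀ j < i, ∀ k', ¬ UCAt P j k') {Q' : List Step}
    (hQ' : IsUCRep (P.drop (i + 2)) Q') : ∃ Q, IsUCRep P Q := by
  obtain ⟨hk, hhi, -⟩ := hP.hgt_of_ucAt hik
  have hlt := hik.lt_length
  set g := deficitSum (P.take i)
  have hig : i + 1 = g + k := by
    have := hgt_eq_sub_deficitSum (P := P) (i := i) (by omega)
    omega
  have hg₁ : g ≠ 1 := deficitSum_ne_one fun k' hk' => hP.two_le (List.mem_of_mem_take hk')
  have hg₃ : g ≠ 3 := fun hg₃ => by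
    obtain ⟨h12, hi⟩ := hP.ucAt_one_two_of_deficitSum_take_eq_three hg₃
    exact hmin 1 (by omega) 2 h12
  obtain ⟨⟨hQ'E, hQ'I⟩, hQ'len, hQ'⟩ := hQ'
  obtain ⟨L, b, hL, hb, rfl⟩ := inI_iff.mp hQ'I
  have hα := inI1_canonicalI1 g
  have hαlen := length_canonicalI1 hg₁ hg₃
  have hpre : UCEquiv (P.take (i + 2)) (ucBlock (canonicalI1 g) k) := by
    refine ucEquiv_iff.mpr fun k' _ j => ?_
    rw [ucAt_take_iff_of_first hik hmin, ucAt_ucBlock hα (by omega), hαlen]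
    omega
  have hequiv := hpre.append (by simp [List.getLast?_take, hik.2]) (by simp [ucBlock])
    (by simp [length_ucBlock, hαlen]; omega) hQ'
  rw [List.take_append_drop] at hequiv
  refine ⟨ucBlock (canonicalI1 g) k ++ ofBlocks L b, ⟨(inE_ucBlock hα hk).append hQ'E, ?_⟩, ?_,
    hequiv⟩
  · exact inI_iff.mpr ⟨(canonicalI1 g, k) :: L, b, List.forall_mem_cons.mpr ⟨⟨hα, hk⟩, hL⟩, hb,
      (ofBlocks_cons (canonicalI1 g, k) L b).symm⟩
  · simp only [List.length_append, length_ucBlock, hαlen, hQ'len, List.length_drop]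
    omega

theorem InE.exists_isUCRep {P : List Step} (hP : InE P) : ∃ Q, IsUCRep P Q := by
  induction hn : P.length using Nat.strong_induction_on generalizing P with
  | _ n ih =>
  classical
  by_cases hocc : ∃ i k, UCAt P i k
  · obtain ⟨k, hik⟩ := Nat.find_spec hocc
    have hlt := hik.lt_length
    obtain ⟨Q', hQ'⟩ := ih _ (by simp; omega) (hP.drop (hP.hgt_of_ucAt hik).2.2) rfl
    exact hP.exists_isUCRep_of_first_ucAt hik
      (fun j hj k' h => Nat.find_min hocc hj ⟨k', h⟩) hQ'
  · exact hP.exists_isUCRep_of_forall_not_ucAt fun i k h => hocc ⟨i, k, h⟩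

lemma not_ucEquiv_ofBlocks_cons {b : List Step} (hb : InI1 b) {t : List Step × ℕ}
    (ht : InI1 t.1 ∧ 2 ≤ t.2) (L : List (List Step × ℕ)) (c : List Step) :
    ¬ UCEquiv b (ofBlocks (t :: L) c) := fun h => by
  refine hb.not_ucAt (t.1.length + t.2 - 1) t.2 ((ucEquiv_iff.mp h t.2 ht.2 _).mpr ?_)
  rw [ofBlocks_cons, ucAt_ucBlock_append ht.1 (by omega)]
  exact .inl ⟨by omega, rfl⟩

lemma eq_of_ucEquiv_ucBlock_append {α β R R' : List Step} {k k' : ℕ} (hα : InI1 α) (hk : 2 ≤ k)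
    (hβ : InI1 β) (hk' : 2 ≤ k') (h : UCEquiv (ucBlock α k ++ R) (ucBlock β k' ++ R')) :
    α = β ∧ k = k' := by
  have hαβ := (ucEquiv_iff.mp h k hk (α.length + k - 1)).mp
    ((ucAt_ucBlock_append hα (by omega) R).mpr (.inl ⟨by omega, rfl⟩))
  have hβα := (ucEquiv_iff.mp h k' hk' (β.length + k' - 1)).mpr
    ((ucAt_ucBlock_append hβ (by omega) R').mpr (.inl ⟨by omega, rfl⟩))
  rw [ucAt_ucBlock_append hβ (by omega)] at hαβ
  rw [ucAt_ucBlock_append hα (by omega)] at hβα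
  obtain ⟨hlen, rfl⟩ : α.length = β.length ∧ k = k' := by omega
  exact ⟨hα.eq_of_length_eq hβ hlen, rfl⟩

lemma ofBlocks_eq_of_ucEquiv {L M : List (List Step × ℕ)} {b c : List Step}
    (hL : ∀ t ∈ L, InI1 t.1 ∧ 2 ≤ t.2) (hb : InI1 b) (hM : ∀ t ∈ M, InI1 t.1 ∧ 2 ≤ t.2)
    (hc : InI1 c) (hlen : (ofBlocks L b).length = (ofBlocks M c).length)
    (h : UCEquiv (ofBlocks L b) (ofBlocks M c)) : ofBlocks L b = ofBlocks M c := by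
  induction L generalizing M with
  | nil =>
    cases M with
    | nil => exact hb.eq_of_length_eq hc hlen
    | cons t M => exact absurd h (not_ucEquiv_ofBlocks_cons hb (hM t (by simp)) M c)
  | cons t L ih =>
    cases M with
    | nil => exact absurd h.symm (not_ucEquiv_ofBlocks_cons hc (hL t (by simp)) L b)
    | cons t' M =>
      obtain ⟨hα, hk⟩ := hL t (by simp)
      obtain ⟨hβ, hk'⟩ := hM t' (by simp)
      rw [ofBlocks_cons, ofBlocks_cons] at h hlen ⊢
      obtain ⟨hαβ, hkk'⟩ := eq_of_ucEquiv_ucBlock_append hα hk hβ hk' h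
      rw [← hαβ, ← hkk'] at h hlen ⊢
      have htail := h.drop (ucBlock t.1 t.2).length
      rw [List.drop_left, List.drop_left] at htail
      rw [ih (fun s hs => hL s (by simp [hs])) (fun s hs => hM s (by simp [hs]))
        (by simpa using hlen) htail]

lemma InI.eq_of_ucEquiv {Q R : List Step} (hQ : InI Q) (hR : InI R)
    (hlen : Q.length = R.length) (h : UCEquiv Q R) : Q = R := by
  obtain ⟨L, b, hL, hb, rfl⟩ := inI_iff.mp hQ
  obtain ⟨M, c, hM, hc, rfl⟩ := inI_iff.mp hR
  exact ofBlocks_eq_of_ucEquiv hL hb hM hc hlen h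

/-- ℐ is a complete set of representatives of the UC-equivalence classes of ℰ. -/
theorem I_complete_set_of_representatives_for_UCEquiv (P : List Step) (hP : InE P) :
    ∃! Q : List Step, (InE Q ∧ InI Q) ∧ Q.length = P.length ∧ UCEquiv P Q := by
  obtain ⟨Q, hQ⟩ := hP.exists_isUCRep
  refine ⟨Q, hQ, fun R hR => ?_⟩
  exact hR.1.2.eq_of_ucEquiv hQ.1.2 (hR.2.1.trans hQ.2.1.symm) (hR.2.2.symm.trans hQ.2.2)
end

section
/- Let k_n denote the number of CU-equivalence classes of paths of length n in ℰ. Then k_0 = 1, k_1 = 0, k_2 = k_3 = k_4 = 1, and k_n = k_{n−1} + k_{n−2} for all n ≥ 5. -/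
/-- The number of equivalence classes, for the equivalence `E`, of paths of
length `n` in ℰ. -/
noncomputable def nClasses (E : List Step → List Step → Prop) (n : ℕ) : ℕ :=
  Nat.card (Quot (fun P Q : {P : List Step // InE P ∧ P.length = n} => E P.1 Q.1))

/-- Two paths are `CU`-equivalent when, for every `k ≥ 2`, the occurrences of
the pattern `C_k U` appear at the same positions in both paths. -/
def CUEquiv (P Q : List Step) : Prop :=
  ∀ k, 2 ≤ k → ∀ i : ℕ,
    (P[i]? = some (Step.C k) ∧ P[i + 1]? = some Step.U) ↔
    (Q[i]? = some (Step.C k) ∧ Q[i + 1]? = some Step.U)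

/-!
A nonempty path in ℰ is `U` followed by a path from height `1` to the axis. In such a path
every catastrophe lands on the axis and, unless it is the last step, is followed by `U`; so the
`C_k U` patterns cut it into blocks — a catastrophe-free stretch from height `1` to height `k`,
of length `2a + k - 1`, followed by `C_k U` — and a tail of length `t ≥ 1` without the pattern.
Hence the CU-classes of paths of length `n + 1` are in bijection with the lists of pairs
`(a, k - 2)` of total weight `∑ (2a + k + 1) < n`, each realised by the blocks
`(UD)^a U^(k-1) C_k U` and the tail `U^(t-1) C_t` (with `C_1 = D`). A list of weight exactly
`m + 3` either starts with a block having `a ≥ 1` (drop one `UD`: weight `m + 1`) or with a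
block having `a = 0` (drop it: weight `≤ m`), which gives the Fibonacci recurrence.
-/

lemma List.eq_iff_forall_getElem?_eq_some_some {α : Type*} {l₁ l₂ : List (Option α)}
    (hlen : l₁.length = l₂.length) :
    l₁ = l₂ ↔ ∀ (i : ℕ) a, l₁[i]? = some (some a) ↔ l₂[i]? = some (some a) := by
  refine ⟨by rintro rfl; simp, fun h => List.ext_getElem hlen fun i h₁ h₂ => Option.ext ?_⟩
  intro a
  simpa [List.getElem?_eq_getElem h₁, List.getElem?_eq_getElem h₂] using h i a

lemma List.replicate_none_append_some_inj {α : Type*} {m m' : ℕ} {x x' : α}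
    {l l' : List (Option α)}
    (h : List.replicate m none ++ some x :: l = List.replicate m' none ++ some x' :: l') :
    m = m' ∧ x = x' ∧ l = l' := by
  induction m generalizing m' with
  | zero => cases m' <;> simp_all [List.replicate_succ]
  | succ m ih =>
    cases m' with
    | zero => simp [List.replicate_succ] at h
    | succ m' => simpa using ih (by simpa [List.replicate_succ] using h)

lemma Nat.card_quot_eq_ncard_range {α β : Type*} {r : α → α → Prop} (f : α → β)
    (hr : ∀ a b, r a b ↔ f a = f b) : Nat.card (Quot r) = (Set.range f).ncard := by
  obtain rfl : r = fun a b => f a = f b := funext₂ fun a b => propext (hr a b)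
  exact Nat.card_congr (Setoid.quotientKerEquivRange f)

namespace CatPath

/-- `L` is a path with the steps of ℰ, going from height `h` to the axis. -/
inductive IsPathFrom : ℕ → List Step → Prop
  | nil : IsPathFrom 0 []
  | up {h : ℕ} {L : List Step} : IsPathFrom (h + 1) L → IsPathFrom h (Step.U :: L)
  | down {h : ℕ} {L : List Step} : IsPathFrom h L → IsPathFrom (h + 1) (Step.D :: L)
  | cat {k : ℕ} {L : List Step} : 2 ≤ k → IsPathFrom 0 L → IsPathFrom k (Step.C k :: L)

def InEFrom (h : ℤ) (L : List Step) : Prop :=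
  (∀ i, 0 ≤ h + hgt L i) ∧ h + hgt L L.length = 0 ∧
    ∀ i k, L[i]? = some (Step.C k) → 2 ≤ k ∧ h + hgt L i = k

lemma inE_iff_inEFrom_zero (P : List Step) : InE P ↔ InEFrom 0 P := by
  simp [InE, InEFrom]

lemma inEFrom_nil (h : ℤ) : InEFrom h [] ↔ h = 0 := by
  simp +contextual [InEFrom, hgt]

lemma InEFrom.nonneg {h : ℤ} {L : List Step} (hL : InEFrom h L) : 0 ≤ h := by
  simpa [hgt] using hL.1 0

lemma hgt_cons_succ (s : Step) (L : List Step) (i : ℕ) :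
    hgt (s :: L) (i + 1) = s.val + hgt L i := by
  simp [hgt]

lemma inEFrom_cons (h : ℤ) (s : Step) (L : List Step) :
    InEFrom h (s :: L) ↔
      0 ≤ h ∧ (∀ k, s = Step.C k → 2 ≤ k ∧ h = k) ∧ InEFrom (h + s.val) L := by
  unfold InEFrom
  rw [← Nat.and_forall_add_one (p := fun i => 0 ≤ h + hgt (s :: L) i),
    ← Nat.and_forall_add_one (p := fun i => ∀ k, (s :: L)[i]? = some (Step.C k) → _)]
  simp only [hgt_cons_succ, List.length_cons, List.getElem?_cons_zero, List.getElem?_cons_succ,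
    Option.some.injEq, ← add_assoc]
  simp only [hgt, List.take_zero, List.map_nil, List.sum_nil, add_zero]
  grind

lemma isPathFrom_iff_inEFrom (L : List Step) : ∀ h : ℕ, IsPathFrom h L ↔ InEFrom h L := by
  induction L with
  | nil =>
    intro h
    rw [inEFrom_nil]
    constructor
    · rintro ⟨⟩; rfl
    · intro h0; rw [show h = 0 by exact_mod_cast h0]; exact .nil
  | cons s L ih =>
    intro h
    rw [inEFrom_cons]
    cases s with
    | U =>
      rw [Step.val, ← Nat.cast_one, ← Nat.cast_add, ← ih]
      constructor
      · rintro ⟨⟩; simp_all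
      · rintro ⟨-, -, hL⟩; exact .up hL
    | D =>
      constructor
      · rintro (_ | _ | ⟨hL⟩ | _)
        exact ⟨by positivity, by simp, by simpa [Step.val] using (ih _).mp hL⟩
      · rintro ⟨-, -, hL⟩
        obtain ⟨h, rfl⟩ : ∃ h', h = h' + 1 := by
          have h1 : 0 ≤ (h : ℤ) + -1 := by simpa [Step.val] using hL.nonneg
          exact ⟨h - 1, by omega⟩
        exact .down ((ih h).mpr (by simpa [Step.val] using hL))
    | C k =>
      constructor
      · rintro (_ | _ | _ | ⟨hk, hL⟩); simp_all [Step.val]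
      · rintro ⟨-, hk, hL⟩
        obtain ⟨hk, hkh⟩ := hk k rfl
        obtain rfl : h = k := by exact_mod_cast hkh
        exact .cat hk ((ih 0).mpr (by simpa [Step.val] using hL))

lemma inE_iff_isPathFrom_zero (P : List Step) : InE P ↔ IsPathFrom 0 P := by
  rw [inE_iff_inEFrom_zero, isPathFrom_iff_inEFrom, Nat.cast_zero]

lemma IsPathFrom.two_le_of_mem {h k : ℕ} {L : List Step} (hL : IsPathFrom h L)
    (hk : Step.C k ∈ L) : 2 ≤ k := by
  induction hL with
  | nil => simp at hk
  | up _ ih | down _ ih => exact ih (by simpa using hk)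
  | cat hk' _ ih =>
    rcases List.mem_cons.mp hk with h | h
    · cases h; exact hk'
    · exact ih h

lemma isPathFrom_nil_iff {h : ℕ} : IsPathFrom h [] ↔ h = 0 :=
  ⟨by rintro ⟨⟩; rfl, by rintro rfl; exact .nil⟩

lemma isPathFrom_zero_iff {L : List Step} :
    IsPathFrom 0 L ↔ L = [] ∨ ∃ M, L = Step.U :: M ∧ IsPathFrom 1 M := by
  constructor
  · rintro (_ | ⟨hM⟩ | _ | ⟨hk, -⟩)
    · exact .inl rfl
    · exact .inr ⟨_, rfl, hM⟩
    · omega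
  · rintro (rfl | ⟨M, rfl, hM⟩)
    · exact .nil
    · exact .up hM

@[simp] lemma length_UDpow (a : ℕ) : (UDpow a).length = 2 * a := by
  simp [UDpow, mul_comm]

@[simp] lemma length_Upow (b : ℕ) : (Upow b).length = b := by
  simp [Upow]

lemma isPathFrom_UDpow_append {h : ℕ} {L : List Step} (hL : IsPathFrom h L) (a : ℕ) :
    IsPathFrom h (UDpow a ++ L) := by
  induction a with
  | zero => simpa [UDpow] using hL
  | succ a ih => simpa [UDpow, List.replicate_succ] using IsPathFrom.up (.down ih)

lemma isPathFrom_Upow_append {h : ℕ} {L : List Step} (b : ℕ) (hL : IsPathFrom (h + b) L) :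
    IsPathFrom h (Upow b ++ L) := by
  induction b generalizing h with
  | zero => simpa [Upow] using hL
  | succ b ih => exact .up (ih (by rwa [add_right_comm, add_assoc]))

def NoCat (L : List Step) : Prop := ∀ k, Step.C k ∉ L

lemma noCat_UDpow (a : ℕ) : NoCat (UDpow a) := by
  simp [NoCat, UDpow, List.mem_flatten, List.mem_replicate]

lemma noCat_Upow (b : ℕ) : NoCat (Upow b) := by
  simp [NoCat, Upow, List.mem_replicate]

lemma NoCat.append {X Y : List Step} (hX : NoCat X) (hY : NoCat Y) : NoCat (X ++ Y) := by
  intro k hk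
  rcases List.mem_append.mp hk with h | h
  exacts [hX k h, hY k h]

lemma noCat_or_exists_eq_append_cat (L : List Step) :
    NoCat L ∨ ∃ X k M, NoCat X ∧ L = X ++ Step.C k :: M := by
  induction L with
  | nil => exact .inl (by simp [NoCat])
  | cons s L ih =>
    cases s with
    | C k => exact .inr ⟨[], k, L, by simp [NoCat], rfl⟩
    | U | D =>
      rcases ih with hL | ⟨X, k, M, hX, rfl⟩
      · exact .inl (by simpa [NoCat] using hL)
      · exact .inr ⟨_ :: X, k, M, by simpa [NoCat] using hX, rfl⟩

/-- `a` counts the down-steps of `X`. -/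
lemma IsPathFrom.of_noCat_append {h : ℕ} {X Y : List Step} (hXY : IsPathFrom h (X ++ Y))
    (hX : NoCat X) : ∃ h' a, IsPathFrom h' Y ∧ h + X.length = h' + 2 * a := by
  induction X generalizing h with
  | nil => exact ⟨h, 0, hXY, by simp⟩
  | cons s X ih =>
    have hX' : NoCat X := fun k hk => hX k (List.mem_cons_of_mem _ hk)
    cases hXY with
    | up hXY =>
      obtain ⟨h', a, hY, he⟩ := ih hXY hX'
      exact ⟨h', a, hY, by simp only [List.length_cons]; omega⟩
    | down hXY =>
      obtain ⟨h', a, hY, he⟩ := ih hXY hX'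
      exact ⟨h', a + 1, hY, by simp only [List.length_cons]; omega⟩
    | cat => exact absurd List.mem_cons_self (hX _)

def cuMark : Step → Option Step → Option ℕ
  | .C k, some .U => some k
  | _, _ => none

def cuSig : List Step → List (Option ℕ)
  | [] => []
  | s :: L => cuMark s L.head? :: cuSig L

@[simp] lemma length_cuSig (L : List Step) : (cuSig L).length = L.length := by
  induction L <;> simp_all [cuSig]

lemma getElem?_cuSig_eq_some {L : List Step} {i k : ℕ} :
    (cuSig L)[i]? = some (some k) ↔ L[i]? = some (Step.C k) ∧ L[i + 1]? = some Step.U := by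
  induction L generalizing i with
  | nil => simp [cuSig]
  | cons s L ih =>
    cases i with
    | succ i => simpa [cuSig] using ih
    | zero =>
      simp only [cuSig, List.getElem?_cons_succ, ← List.head?_eq_getElem?]
      rcases s with _ | _ | k' <;> rcases L with _ | ⟨_ | _ | _, _⟩ <;> simp [cuMark]

lemma cuSig_append_of_noCat {X : List Step} (hX : NoCat X) (Y : List Step) :
    cuSig (X ++ Y) = List.replicate X.length none ++ cuSig Y := by
  induction X with
  | nil => rfl
  | cons s X ih =>
    have hX' : NoCat X := fun k hk => hX k (List.mem_cons_of_mem _ hk)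
    cases s with
    | C k => exact absurd List.mem_cons_self (hX k)
    | U | D => simp [cuSig, cuMark, ih hX', List.replicate_succ]

lemma cuSig_eq_replicate_of_noCat {X : List Step} (hX : NoCat X) :
    cuSig X = List.replicate X.length none := by
  simpa [cuSig] using cuSig_append_of_noCat hX []

lemma cuSig_singleton (s : Step) : cuSig [s] = [none] := by
  cases s <;> rfl

lemma cuSig_cat_up (k : ℕ) (L : List Step) :
    cuSig (Step.C k :: Step.U :: L) = some k :: none :: cuSig L := by
  simp [cuSig, cuMark]

lemma cuEquiv_iff_cuSig_eq {P Q : List Step} (hP : ∀ k, Step.C k ∈ P → 2 ≤ k)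
    (hQ : ∀ k, Step.C k ∈ Q → 2 ≤ k) (hlen : P.length = Q.length) :
    CUEquiv P Q ↔ cuSig P = cuSig Q := by
  rw [List.eq_iff_forall_getElem?_eq_some_some (by simpa using hlen)]
  simp only [getElem?_cuSig_eq_some]
  refine ⟨fun h i k => ⟨fun hPk => ?_, fun hQk => ?_⟩, fun h k _ i => h i k⟩
  · exact (h k (hP k (List.mem_of_getElem? hPk.1)) i).mp hPk
  · exact (h k (hQ k (List.mem_of_getElem? hQk.1)) i).mpr hQk

/-- A block `(a, b)` stands for a stretch `(UD)^a U^(b+1)` followed by `C_{b+2} U`. -/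
def codeWeight (d : List (ℕ × ℕ)) : ℕ := (d.map fun p => 2 * p.1 + p.2 + 3).sum

@[simp] lemma codeWeight_nil : codeWeight [] = 0 := rfl

@[simp] lemma codeWeight_cons (a b : ℕ) (d : List (ℕ × ℕ)) :
    codeWeight ((a, b) :: d) = 2 * a + b + 3 + codeWeight d := by
  simp [codeWeight]

def codeSig : List (ℕ × ℕ) → ℕ → List (Option ℕ)
  | [], t => List.replicate t none
  | (a, b) :: d, t => List.replicate (2 * a + b + 1) none ++ some (b + 2) :: none :: codeSig d t

lemma codeSig_inj {d d' : List (ℕ × ℕ)} {t t' : ℕ} (h : codeSig d t = codeSig d' t') :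
    d = d' := by
  induction d generalizing d' with
  | nil =>
    cases d' with
    | nil => rfl
    | cons p d' =>
      have : some (p.2 + 2) ∈ codeSig [] t := by rw [h]; simp [codeSig]
      simp [codeSig] at this
  | cons p d ih =>
    obtain ⟨a, b⟩ := p
    cases d' with
    | nil =>
      have : some (b + 2) ∈ codeSig [] t' := by rw [← h]; simp [codeSig]
      simp [codeSig] at this
    | cons p' d' =>
      obtain ⟨a', b'⟩ := p'
      obtain ⟨hlen, hb, hd⟩ := List.replicate_none_append_some_inj h
      obtain rfl : b = b' := by omega
      obtain rfl : a = a' := by omega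
      rw [ih (List.cons_injective hd)]

lemma exists_cuSig_eq_codeSig (L : List Step) (hL : IsPathFrom 1 L) :
    ∃ d, codeWeight d < L.length ∧ cuSig L = codeSig d (L.length - codeWeight d) := by
  induction hn : L.length using Nat.strong_induction_on generalizing L with
  | _ n ih =>
  subst hn
  rcases noCat_or_exists_eq_append_cat L with hcat | ⟨X, k, M, hX, rfl⟩
  · obtain ⟨h', a, hend, hlen⟩ := IsPathFrom.of_noCat_append (Y := []) (by simpa using hL) hcat
    rw [isPathFrom_nil_iff] at hend
    refine ⟨[], by simp only [codeWeight_nil] at hlen ⊢; omega, ?_⟩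
    simp [codeSig, cuSig_eq_replicate_of_noCat hcat]
  · obtain ⟨h', a, hCM, hlen⟩ := hL.of_noCat_append hX
    rcases hCM with _ | _ | _ | ⟨hk, hM⟩
    obtain ⟨b, rfl⟩ : ∃ b, k = b + 2 := ⟨k - 2, by omega⟩
    rcases isPathFrom_zero_iff.mp hM with rfl | ⟨M, rfl, hM'⟩
    · refine ⟨[], by simp, ?_⟩
      rw [cuSig_append_of_noCat hX, cuSig_singleton]
      simp [codeSig, List.replicate_succ']
    · have hlenM : M.length < (X ++ Step.C (b + 2) :: Step.U :: M).length := by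
        simp only [List.length_append, List.length_cons]; omega
      obtain ⟨d, hd, hsig⟩ := ih M.length hlenM M hM' rfl
      refine ⟨(a, b) :: d, ?_, ?_⟩
      · simp only [codeWeight_cons, List.length_append, List.length_cons]; omega
      · rw [cuSig_append_of_noCat hX, cuSig_cat_up, hsig, codeSig,
          show X.length = 2 * a + b + 1 by omega]
        congr 4
        simp only [List.length_append, List.length_cons, codeWeight_cons]
        omega

def tailPath (t : ℕ) : List Step := Upow (t - 1) ++ [cfin t]

def codePath : List (ℕ × ℕ) → ℕ → List Step
  | [], t => tailPath t
  | (a, b) :: d, t => UDpow a ++ Upow (b + 1) ++ Step.C (b + 2) :: Step.U :: codePath d t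

lemma isPathFrom_tailPath {t : ℕ} (ht : 1 ≤ t) : IsPathFrom 1 (tailPath t) := by
  refine isPathFrom_Upow_append _ ?_
  rw [show 1 + (t - 1) = t by omega, cfin]
  split_ifs with h1
  · subst h1; exact .down .nil
  · exact .cat (by omega) .nil

lemma isPathFrom_codePath {t : ℕ} (ht : 1 ≤ t) (d : List (ℕ × ℕ)) :
    IsPathFrom 1 (codePath d t) := by
  induction d with
  | nil => exact isPathFrom_tailPath ht
  | cons p d ih =>
    obtain ⟨a, b⟩ := p
    rw [codePath, List.append_assoc]
    refine isPathFrom_UDpow_append (isPathFrom_Upow_append _ ?_) a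
    rw [show 1 + (b + 1) = b + 2 by omega]
    exact .cat (by omega) (.up ih)

lemma length_codePath {t : ℕ} (ht : 1 ≤ t) (d : List (ℕ × ℕ)) :
    (codePath d t).length = codeWeight d + t := by
  induction d with
  | nil =>
    simp only [codePath, tailPath, List.length_append, length_Upow, List.length_singleton,
      codeWeight_nil]
    omega
  | cons p d ih =>
    obtain ⟨a, b⟩ := p
    simp only [codePath, List.length_append, length_UDpow, length_Upow, List.length_cons, ih,
      codeWeight_cons]
    omega

lemma cuSig_codePath {t : ℕ} (ht : 1 ≤ t) (d : List (ℕ × ℕ)) :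
    cuSig (codePath d t) = codeSig d t := by
  induction d with
  | nil =>
    rw [codePath, tailPath, cuSig_append_of_noCat (noCat_Upow _), cuSig_singleton, codeSig,
      ← List.replicate_succ', length_Upow]
    congr
    omega
  | cons p d ih =>
    obtain ⟨a, b⟩ := p
    rw [codePath, cuSig_append_of_noCat ((noCat_UDpow a).append (noCat_Upow _)), cuSig_cat_up,
      ih, codeSig]
    rw [List.length_append, length_UDpow, length_Upow, add_assoc]

def codesBelow (n : ℕ) : Set (List (ℕ × ℕ)) := {d | codeWeight d < n}

lemma image_cuSig_length_succ (n : ℕ) :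
    cuSig '' {P | IsPathFrom 0 P ∧ P.length = n + 1} =
      (fun d => none :: codeSig d (n - codeWeight d)) '' codesBelow n := by
  ext σ
  simp only [Set.mem_image, Set.mem_ofPred_eq, codesBelow]
  constructor
  · rintro ⟨P, ⟨hP, hlen⟩, rfl⟩
    rcases isPathFrom_zero_iff.mp hP with rfl | ⟨M, rfl, hM⟩
    · simp at hlen
    · obtain ⟨d, hd, hsig⟩ := exists_cuSig_eq_codeSig M hM
      simp only [List.length_cons, add_left_inj] at hlen
      exact ⟨d, hlen ▸ hd, by simp [cuSig, cuMark, hsig, hlen]⟩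
  · rintro ⟨d, hd, rfl⟩
    have ht : 1 ≤ n - codeWeight d := by omega
    refine ⟨_, ⟨.up (isPathFrom_codePath ht d), ?_⟩, ?_⟩
    · simp only [List.length_cons, length_codePath ht]; omega
    · simp [cuSig, cuMark, cuSig_codePath ht]

lemma nClasses_eq_ncard (n : ℕ) :
    nClasses CUEquiv n = (cuSig '' {P | IsPathFrom 0 P ∧ P.length = n}).ncard := by
  rw [nClasses, Nat.card_quot_eq_ncard_range (fun P => cuSig P.1)]
  · congr 1
    ext σ
    simp [inE_iff_isPathFrom_zero]
  · rintro ⟨P, hP, rfl⟩ ⟨Q, hQ, hlen⟩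
    rw [inE_iff_isPathFrom_zero] at hP hQ
    exact cuEquiv_iff_cuSig_eq (fun _ => hP.two_le_of_mem) (fun _ => hQ.two_le_of_mem) hlen.symm

lemma nClasses_zero : nClasses CUEquiv 0 = 1 := by
  rw [nClasses_eq_ncard]
  have : {P | IsPathFrom 0 P ∧ P.length = 0} = {[]} := by
    ext P
    simp only [Set.mem_ofPred_eq, List.length_eq_zero_iff, Set.mem_singleton_iff]
    exact ⟨And.right, by rintro rfl; exact ⟨.nil, rfl⟩⟩
  rw [this, Set.image_singleton, Set.ncard_singleton]

lemma nClasses_succ (n : ℕ) : nClasses CUEquiv (n + 1) = (codesBelow n).ncard := by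
  rw [nClasses_eq_ncard, image_cuSig_length_succ, Set.ncard_image_of_injective]
  intro d d' h
  exact codeSig_inj (List.cons_injective h)

lemma eq_nil_of_codeWeight_lt_three {d : List (ℕ × ℕ)} (hd : codeWeight d < 3) : d = [] := by
  rcases d with _ | ⟨⟨a, b⟩, d⟩
  · rfl
  · simp only [codeWeight_cons] at hd; omega

lemma codesBelow_zero : codesBelow 0 = ∅ := by
  simp [codesBelow]

lemma codesBelow_eq_singleton {n : ℕ} (h1 : 1 ≤ n) (h3 : n ≤ 3) : codesBelow n = {[]} := by
  ext d
  simp only [codesBelow, Set.mem_ofPred_eq, Set.mem_singleton_iff]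
  exact ⟨fun hd => eq_nil_of_codeWeight_lt_three (by omega), by rintro rfl; simpa⟩

def grow (m : ℕ) (d : List (ℕ × ℕ)) : List (ℕ × ℕ) :=
  if codeWeight d = m + 1 then d.modifyHead fun p => (p.1 + 1, p.2)
  else (0, m - codeWeight d) :: d

def shrink : List (ℕ × ℕ) → List (ℕ × ℕ)
  | (a + 1, b) :: d => (a, b) :: d
  | (0, _) :: d => d
  | [] => []

lemma codeWeight_grow {m : ℕ} {d : List (ℕ × ℕ)} (hd : codeWeight d < m + 2) :
    codeWeight (grow m d) = m + 3 := by
  unfold grow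
  split_ifs with h
  · rcases d with _ | ⟨⟨a, b⟩, d⟩
    · simp at h
    · simp only [codeWeight_cons, List.modifyHead_cons] at h ⊢; omega
  · simp only [codeWeight_cons]; omega

lemma shrink_grow {m : ℕ} {d : List (ℕ × ℕ)} (hd : codeWeight d < m + 2) :
    shrink (grow m d) = d := by
  unfold grow
  split_ifs with h
  · rcases d with _ | ⟨⟨a, b⟩, d⟩
    · simp at h
    · rfl
  · rfl

lemma grow_shrink {m : ℕ} {d : List (ℕ × ℕ)} (hd : codeWeight d = m + 3) :
    grow m (shrink d) = d := by
  rcases d with _ | ⟨⟨_ | a, b⟩, d⟩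
  · simp at hd
  · simp only [codeWeight_cons] at hd
    simp [shrink, grow, show codeWeight d ≠ m + 1 by omega, show b = m - codeWeight d by omega]
  · simp only [codeWeight_cons] at hd
    simp [shrink, grow, show 2 * a + b + 3 + codeWeight d = m + 1 by omega]

lemma codeWeight_shrink_lt {m : ℕ} {d : List (ℕ × ℕ)} (hd : codeWeight d = m + 3) :
    codeWeight (shrink d) < m + 2 := by
  rcases d with _ | ⟨⟨_ | a, b⟩, d⟩ <;>
    simp only [codeWeight_nil, codeWeight_cons, shrink] at hd ⊢ <;> omega

lemma codesBelow_add_four (m : ℕ) :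
    codesBelow (m + 4) = codesBelow (m + 3) ∪ grow m '' codesBelow (m + 2) := by
  ext d
  simp only [codesBelow, Set.mem_union, Set.mem_image, Set.mem_ofPred_eq]
  constructor
  · intro hd
    by_cases hlt : codeWeight d < m + 3
    · exact .inl hlt
    · have hd3 : codeWeight d = m + 3 := by omega
      exact .inr ⟨shrink d, codeWeight_shrink_lt hd3, grow_shrink hd3⟩
  · rintro (hd | ⟨d, hd, rfl⟩)
    · omega
    · rw [codeWeight_grow hd]; omega

lemma codesBelow_finite (n : ℕ) : (codesBelow n).Finite := by
  induction n using Nat.strong_induction_on with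
  | _ n ih =>
  by_cases hn : n ≤ 3
  · exact (Set.finite_singleton []).subset fun d hd => eq_nil_of_codeWeight_lt_three (by
      simp only [codesBelow, Set.mem_ofPred_eq] at hd; omega)
  · obtain ⟨m, rfl⟩ : ∃ m, n = m + 4 := ⟨n - 4, by omega⟩
    rw [codesBelow_add_four]
    exact (ih _ (by omega)).union ((ih _ (by omega)).image _)

lemma ncard_codesBelow_add_four (m : ℕ) :
    (codesBelow (m + 4)).ncard = (codesBelow (m + 3)).ncard + (codesBelow (m + 2)).ncard := by
  have hinj : Set.InjOn (grow m) (codesBelow (m + 2)) :=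
    Set.LeftInvOn.injOn fun d hd => shrink_grow hd
  have hdisj : Disjoint (codesBelow (m + 3)) (grow m '' codesBelow (m + 2)) := by
    refine Set.disjoint_left.mpr fun d hd ⟨d', hd', hgrow⟩ => ?_
    simp only [codesBelow, Set.mem_ofPred_eq] at hd hd'
    rw [← hgrow, codeWeight_grow hd'] at hd
    omega
  rw [codesBelow_add_four, Set.ncard_union_eq hdisj (codesBelow_finite _)
    ((codesBelow_finite _).image _), hinj.ncard_image]

end CatPath

/-- The number `k n` of CU-equivalence classes of paths of length `n` in ℰ
satisfies `k 0 = 1`, `k 1 = 0`, `k 2 = k 3 = k 4 = 1` and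
`k n = k (n-1) + k (n-2)` for `n ≥ 5`. -/
theorem count_CUEquiv_classes :
    nClasses CUEquiv 0 = 1 ∧ nClasses CUEquiv 1 = 0 ∧ nClasses CUEquiv 2 = 1 ∧
    nClasses CUEquiv 3 = 1 ∧ nClasses CUEquiv 4 = 1 ∧
    ∀ n, 5 ≤ n → nClasses CUEquiv n = nClasses CUEquiv (n - 1) + nClasses CUEquiv (n - 2) := by
  have hsmall : ∀ n, 1 ≤ n → n ≤ 3 → nClasses CUEquiv (n + 1) = 1 := fun n h1 h3 => by
    rw [CatPath.nClasses_succ, CatPath.codesBelow_eq_singleton h1 h3, Set.ncard_singleton]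
  refine ⟨CatPath.nClasses_zero, ?_, hsmall 1 le_rfl (by norm_num),
    hsmall 2 (by norm_num) (by norm_num), hsmall 3 (by norm_num) le_rfl, fun n hn => ?_⟩
  · rw [CatPath.nClasses_succ, CatPath.codesBelow_zero, Set.ncard_empty]
  · obtain ⟨m, rfl⟩ : ∃ m, n = m + 5 := ⟨n - 5, by omega⟩
    rw [show m + 5 - 1 = m + 3 + 1 by omega, show m + 5 - 2 = m + 2 + 1 by omega,
      CatPath.nClasses_succ, CatPath.nClasses_succ, CatPath.nClasses_succ,
      CatPath.ncard_codesBelow_add_four]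
end
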